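/- Let F(w) = H(w) + λG(w) where H : ℝ^d → ℝ is convex and differentiable, λ > 0, and G(w) = Σ_i (e^{w_i} + e^{−w_i} − 2 − w_i²). Then for every minimizer w* of F (with ∇F(w*) = 0), F(w) − F(w*) ≥ (λ/(36d))·‖w − w*‖⁴ for all w ∈ ℝ^d; equivalently, ‖w − w*‖² ≤ 6√(d/λ)·√(F(w) − F(w*)). -/

import Mathlib

/-!
Since `∇F(w*) = 0`, the tangent-line inequality for the convex `H` gives
`F(w) - F(w*) ≥ λ (G(w) - G(w*) - ⟨∇G(w*), w - w*⟩)`. The function `G` is a sum of copies of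
`φ(x) = 2 cosh x - 2 - x²`, and `φ - x⁴/12` is convex because `cosh x ≥ 1 + x²/2`; hence the
Bregman divergence of `φ` dominates that of `x⁴/12`, which is at least `(x - y)⁴/36`.
Summing over coordinates and using `‖δ‖⁴ = (∑ δᵢ²)² ≤ d ∑ δᵢ⁴` gives the bound.
-/

open Real Set

theorem ConvexOn.apply_sub_le_sub_of_hasFDerivAt {E : Type*} [NormedAddCommGroup E]
    [NormedSpace ℝ E] {s : Set E} {f : E → ℝ} {f' : E →L[ℝ] ℝ} {x y : E}
    (hf : ConvexOn ℝ s f) (hx : x ∈ s) (hy : y ∈ s) (hf' : HasFDerivAt f f' x) :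
    f' (y - x) ≤ f y - f x := by
  have hline : ConvexOn ℝ (AffineMap.lineMap x y ⁻¹' s) (f ∘ AffineMap.lineMap (k := ℝ) x y) :=
    hf.comp_affineMap _
  have hf'₀ : HasFDerivAt f f' (AffineMap.lineMap x y (0 : ℝ)) := by simpa using hf'
  have hderiv : HasDerivAt (f ∘ AffineMap.lineMap (k := ℝ) x y) (f' (y - x)) 0 :=
    hf'₀.comp_hasDerivAt 0 AffineMap.hasDerivAt_lineMap
  simpa [slope_def_field] using
    hline.le_slope_of_hasDerivAt (by simpa using hx) (by simpa using hy) one_pos hderiv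

theorem ConvexOn.mul_sub_le_sub_of_hasDerivAt {s : Set ℝ} {f : ℝ → ℝ} {f' x y : ℝ}
    (hf : ConvexOn ℝ s f) (hx : x ∈ s) (hy : y ∈ s) (hf' : HasDerivAt f f' x) :
    f' * (y - x) ≤ f y - f x := by
  simpa [mul_comm] using hf.apply_sub_le_sub_of_hasFDerivAt hx hy hf'.hasFDerivAt

namespace Real

theorem one_add_sq_div_two_le_cosh (x : ℝ) : 1 + x ^ 2 / 2 ≤ cosh x := by
  have hsinh : (x / 2) ^ 2 ≤ sinh (x / 2) ^ 2 := by
    rcases le_total 0 (x / 2) with h | h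
    · nlinarith [self_le_sinh_iff.2 h]
    · nlinarith [sinh_le_self_iff.2 h]
  have hcosh : cosh x = cosh (x / 2) ^ 2 + sinh (x / 2) ^ 2 := by
    rw [← cosh_two_mul, mul_div_cancel₀ x two_ne_zero]
  nlinarith [cosh_sq' (x / 2)]

theorem hasDerivAt_two_mul_cosh_sub_sq_sub_pow_four (x : ℝ) :
    HasDerivAt (fun x => 2 * cosh x - x ^ 2 - x ^ 4 / 12) (2 * sinh x - 2 * x - x ^ 3 / 3) x :=
  ((((hasDerivAt_cosh x).const_mul 2).sub (hasDerivAt_pow 2 x)).sub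
    ((hasDerivAt_pow 4 x).div_const 12)).congr_deriv (by ring)

theorem hasDerivAt_two_mul_sinh_sub_sub_pow_three (x : ℝ) :
    HasDerivAt (fun x => 2 * sinh x - 2 * x - x ^ 3 / 3) (2 * cosh x - 2 - x ^ 2) x :=
  ((((hasDerivAt_sinh x).const_mul 2).sub ((hasDerivAt_id x).const_mul 2)).sub
    ((hasDerivAt_pow 3 x).div_const 3)).congr_deriv (by ring)

theorem convexOn_two_mul_cosh_sub_sq_sub_pow_four :
    ConvexOn ℝ univ (fun x => 2 * cosh x - x ^ 2 - x ^ 4 / 12) := by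
  have hderiv : deriv (fun x => 2 * cosh x - x ^ 2 - x ^ 4 / 12) =
      fun x => 2 * sinh x - 2 * x - x ^ 3 / 3 :=
    funext fun x => (hasDerivAt_two_mul_cosh_sub_sq_sub_pow_four x).deriv
  refine convexOn_univ_of_deriv2_nonneg
    (fun x => (hasDerivAt_two_mul_cosh_sub_sq_sub_pow_four x).differentiableAt)
    (hderiv ▸ fun x => (hasDerivAt_two_mul_sinh_sub_sub_pow_three x).differentiableAt)
    fun x => ?_
  rw [Function.iterate_succ_apply, Function.iterate_one, hderiv,
    (hasDerivAt_two_mul_sinh_sub_sub_pow_three x).deriv]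
  linarith [one_add_sq_div_two_le_cosh x]

theorem hasDerivAt_two_mul_cosh_sub_two_sub_sq (x : ℝ) :
    HasDerivAt (fun x => 2 * cosh x - 2 - x ^ 2) (2 * sinh x - 2 * x) x :=
  ((((hasDerivAt_cosh x).const_mul 2).sub_const 2).sub (hasDerivAt_pow 2 x)).congr_deriv
    (by ring)

theorem pow_four_div_le_two_mul_cosh_bregman (x y : ℝ) :
    (x - y) ^ 4 / 36 ≤
      (2 * cosh x - 2 - x ^ 2) - (2 * cosh y - 2 - y ^ 2) - (2 * sinh y - 2 * y) * (x - y) := by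
  have htangent := convexOn_two_mul_cosh_sub_sq_sub_pow_four.mul_sub_le_sub_of_hasDerivAt
    (mem_univ y) (mem_univ x) (hasDerivAt_two_mul_cosh_sub_sq_sub_pow_four y)
  -- the Bregman divergence of `x ↦ x⁴ / 12` exceeds `(x - y)⁴ / 36` by `(x - y)²(x + 2y)² / 18`
  linear_combination htangent + sq_nonneg ((x - y) * (x + 2 * y)) / 18

end Real

theorem EuclideanSpace.hasFDerivAt_sum_comp_apply {ι : Type*} [Fintype ι] {g : ℝ → ℝ}
    {g' : ι → ℝ} {w : EuclideanSpace ℝ ι} (hg : ∀ i, HasDerivAt g (g' i) (w i)) :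
    HasFDerivAt (fun v : EuclideanSpace ℝ ι => ∑ i, g (v i))
      (∑ i, g' i • EuclideanSpace.proj (𝕜 := ℝ) i) w :=
  HasFDerivAt.fun_sum fun i _ => (hg i).comp_hasFDerivAt w
    (show HasFDerivAt (fun v : EuclideanSpace ℝ ι => v i) (EuclideanSpace.proj (𝕜 := ℝ) i) w from
      (EuclideanSpace.proj (𝕜 := ℝ) i).hasFDerivAt)

theorem EuclideanSpace.norm_pow_four_le_card_mul_sum_pow_four {ι : Type*} [Fintype ι]
    (v : EuclideanSpace ℝ ι) : ‖v‖ ^ 4 ≤ Fintype.card ι * ∑ i, v i ^ 4 := by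
  have hnorm : ‖v‖ ^ 2 = ∑ i, v i ^ 2 := by simp [EuclideanSpace.norm_sq_eq]
  calc ‖v‖ ^ 4 = (∑ i, v i ^ 2) ^ 2 := by rw [← hnorm]; ring
    _ ≤ Fintype.card ι * ∑ i, (v i ^ 2) ^ 2 := sq_sum_le_card_mul_sum_sq
    _ = Fintype.card ι * ∑ i, v i ^ 4 := by simp only [← pow_mul]

theorem ConvexOn.mul_sub_sub_le_of_fderiv_add_mul_eq_zero {E : Type*} [NormedAddCommGroup E]
    [NormedSpace ℝ E] {H G : E → ℝ} {H' G' : E →L[ℝ] ℝ} {lam : ℝ} {x : E}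
    (hH : ConvexOn ℝ univ H) (hH' : HasFDerivAt H H' x) (hG' : HasFDerivAt G G' x)
    (hcrit : fderiv ℝ (fun w => H w + lam * G w) x = 0) (y : E) :
    lam * (G y - G x - G' (y - x)) ≤ (H y + lam * G y) - (H x + lam * G x) := by
  have hsum : H' + lam • G' = 0 := (hH'.add (hG'.const_mul lam)).fderiv ▸ hcrit
  have hH'apply : H' (y - x) = -(lam * G' (y - x)) := by
    simpa [eq_neg_iff_add_eq_zero] using congrArg (· (y - x)) hsum
  linarith [hH.apply_sub_le_sub_of_hasFDerivAt (mem_univ x) (mem_univ y) hH']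

theorem div_mul_pow_four_le_and_sq_le {lam n r Δ : ℝ} (hlam : 0 < lam) (hn : 0 ≤ n)
    (hΔ : 0 ≤ Δ) (h : lam * r ^ 4 ≤ 36 * n * Δ) :
    lam / (36 * n) * r ^ 4 ≤ Δ ∧ r ^ 2 ≤ 6 * √(n / lam) * √Δ := by
  constructor
  · rcases hn.eq_or_lt with rfl | hn
    · simpa using hΔ
    · rw [div_mul_eq_mul_div, div_le_iff₀ (by positivity)]
      linarith
  · rw [← pow_le_pow_iff_left₀ (by positivity) (by positivity) two_ne_zero, mul_pow, mul_pow,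
      sq_sqrt (by positivity), sq_sqrt hΔ, ← pow_mul, show 2 * 2 = 4 from rfl,
      show 6 ^ 2 * (n / lam) * Δ = 36 * n * Δ / lam by ring, le_div_iff₀ hlam]
    linarith

/-- For `F = H + λG` with `H` convex differentiable, `λ > 0`, and
`G(w) = Σᵢ (e^{wᵢ} + e^{−wᵢ} − 2 − wᵢ²)`: every `w*` with `∇F(w*) = 0` satisfies
`F(w) − F(w*) ≥ (λ/(36d))‖w − w*‖⁴` for all `w`; equivalently
`‖w − w*‖² ≤ 6√(d/λ)·√(F(w) − F(w*))`. -/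
theorem stmt18 (d : ℕ) (lam : ℝ) (hlam : 0 < lam)
    (H : EuclideanSpace ℝ (Fin d) → ℝ)
    (hHconv : ConvexOn ℝ Set.univ H) (hHdiff : Differentiable ℝ H)
    (G F : EuclideanSpace ℝ (Fin d) → ℝ)
    (hG : G = fun w => ∑ i, (Real.exp (w i) + Real.exp (-(w i)) - 2 - (w i) ^ 2))
    (hF : F = fun w => H w + lam * G w)
    (wstar : EuclideanSpace ℝ (Fin d)) (hstar : gradient F wstar = 0) :
    ∀ w : EuclideanSpace ℝ (Fin d),
      (lam / (36 * d)) * ‖w - wstar‖ ^ 4 ≤ F w - F wstar ∧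
      ‖w - wstar‖ ^ 2 ≤ 6 * Real.sqrt (d / lam) * Real.sqrt (F w - F wstar) := by
  intro w
  have hcrit : fderiv ℝ F wstar = 0 := by rw [← toDual_gradient, hstar, map_zero]
  obtain rfl : G = fun v => ∑ i, (2 * cosh (v i) - 2 - v i ^ 2) := by
    simp only [hG, cosh_eq]; ring_nf
  subst hF
  have hdescent := hHconv.mul_sub_sub_le_of_fderiv_add_mul_eq_zero (hHdiff wstar).hasFDerivAt
    (EuclideanSpace.hasFDerivAt_sum_comp_apply
      fun i => hasDerivAt_two_mul_cosh_sub_two_sub_sq (wstar i)) hcrit w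
  have hbregman : (∑ i, (w - wstar) i ^ 4) / 36 ≤
      ∑ i, (2 * cosh (w i) - 2 - w i ^ 2) - ∑ i, (2 * cosh (wstar i) - 2 - wstar i ^ 2) -
        (∑ i, (2 * sinh (wstar i) - 2 * wstar i) • EuclideanSpace.proj (𝕜 := ℝ) i)
          (w - wstar) := by
    simp only [Finset.sum_div, ← Finset.sum_sub_distrib, sum_apply]
    exact Finset.sum_le_sum fun i _ => pow_four_div_le_two_mul_cosh_bregman (w i) (wstar i)
  have hgap := (mul_le_mul_of_nonneg_left hbregman hlam.le).trans hdescent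
  have hnorm := EuclideanSpace.norm_pow_four_le_card_mul_sum_pow_four (w - wstar)
  rw [Fintype.card_fin] at hnorm
  refine div_mul_pow_four_le_and_sq_le hlam d.cast_nonneg (le_trans (by positivity) hgap) ?_
  calc lam * ‖w - wstar‖ ^ 4 ≤ lam * (d * ∑ i, (w - wstar) i ^ 4) :=
        mul_le_mul_of_nonneg_left hnorm hlam.le
    _ = 36 * d * (lam * ((∑ i, (w - wstar) i ^ 4) / 36)) := by ring
    _ ≤ _ := mul_le_mul_of_nonneg_left hgap (by positivity)
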